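/- arXiv:2601.14005 — 14 statements merged into one kernel-verified Lean document; each statement's English description precedes it below -/
import Mathlib

section
/- The map θ sends D1(ξ,ℓ) into D2(ξ) and preserves the objective: for every (x,l) ∈ D1(ξ,ℓ) one has θ(x,l) ∈ D2(ξ) and F2(θ(x,l)) = F1(x,l). -/
/-!
θ writes a position of size xᵢ at leverage lᵢ as a convex combination of an unlevered position
and one at maximal leverage ℓᵢ, with weights chosen so that both the staked amount xᵢ lᵢ and
the borrowed amount xᵢ (lᵢ - 1) are unchanged; hence the objective is unchanged term by term.
-/

open Finset

section LeverageSplit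

variable {K : Type*} [Field K] (x l L : K)

theorem leverage_split_add (hL : L - 1 ≠ 0) :
    x * (L - l) / (L - 1) + x * (l - 1) / (L - 1) = x := by
  field_simp
  ring

theorem leverage_split_add_mul (hL : L - 1 ≠ 0) :
    x * (L - l) / (L - 1) + x * (l - 1) / (L - 1) * L = x * l := by
  field_simp
  ring

end LeverageSplit

theorem theta_maps_D1_to_D2_and_preserves_objective_general
    (n : ℕ) (ξ : ℝ)
    (L : Fin n → ℝ) (hL : ∀ i, 1 < L i)
    (s : ℝ) (h : Fin n → ℝ → ℝ)
    (x l : Fin n → ℝ)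
    (hx : ∀ i, 0 ≤ x i) (hxsum : ∑ i, x i = ξ)
    (hl1 : ∀ i, 1 ≤ l i) (hl2 : ∀ i, l i ≤ L i) :
    let x0 : Fin n → ℝ := fun i => x i * (L i - l i) / (L i - 1)
    let x1 : Fin n → ℝ := fun i => x i * (l i - 1) / (L i - 1)
    -- θ(x,l) = (x0, x1) lies in D2(ξ):
    ((∀ i, 0 ≤ x0 i) ∧ (∀ i, 0 ≤ x1 i) ∧ (∑ i, x0 i) + (∑ i, x1 i) = ξ) ∧
    -- and F2(θ(x,l)) = F1(x,l):
    (s * ∑ i, x0 i) + (s * ∑ i, x1 i * L i) - (∑ i, h i (x1 i * (L i - 1)))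
      = (s * ∑ i, x i * l i) - (∑ i, h i (x i * (l i - 1))) := by
  intro x0 x1
  have hL1 : ∀ i, 0 < L i - 1 := fun i => sub_pos.mpr (hL i)
  refine ⟨⟨fun i => ?_, fun i => ?_, ?_⟩, ?_⟩
  · exact div_nonneg (mul_nonneg (hx i) (sub_nonneg.mpr (hl2 i))) (hL1 i).le
  · exact div_nonneg (mul_nonneg (hx i) (sub_nonneg.mpr (hl1 i))) (hL1 i).le
  · rw [← sum_add_distrib, ← hxsum]
    exact sum_congr rfl fun i _ => leverage_split_add _ _ _ (hL1 i).ne'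
  · rw [← mul_add, ← sum_add_distrib]
    simp only [x0, x1, leverage_split_add_mul _ _ _ (hL1 _).ne', div_mul_cancel₀ _ (hL1 _).ne']

/-- The map θ sends D1(ξ,ℓ) into D2(ξ) and preserves the objective:
for every (x,l) ∈ D1(ξ,ℓ) one has θ(x,l) ∈ D2(ξ) and F2(θ(x,l)) = F1(x,l). -/
theorem theta_maps_D1_to_D2_and_preserves_objective
    (n : ℕ) (hn : 1 ≤ n) (ξ : ℝ) (hξ : 0 < ξ)
    (L : Fin n → ℝ) (hL : ∀ i, 1 < L i)
    (s : ℝ) (h : Fin n → ℝ → ℝ)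
    (x l : Fin n → ℝ)
    (hx : ∀ i, 0 ≤ x i) (hxsum : ∑ i, x i = ξ)
    (hl1 : ∀ i, 1 ≤ l i) (hl2 : ∀ i, l i ≤ L i) :
    let x0 : Fin n → ℝ := fun i => x i * (L i - l i) / (L i - 1)
    let x1 : Fin n → ℝ := fun i => x i * (l i - 1) / (L i - 1)
    -- θ(x,l) = (x0, x1) lies in D2(ξ):
    ((∀ i, 0 ≤ x0 i) ∧ (∀ i, 0 ≤ x1 i) ∧ (∑ i, x0 i) + (∑ i, x1 i) = ξ) ∧
    -- and F2(θ(x,l)) = F1(x,l):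
    (s * ∑ i, x0 i) + (s * ∑ i, x1 i * L i) - (∑ i, h i (x1 i * (L i - 1)))
      = (s * ∑ i, x i * l i) - (∑ i, h i (x i * (l i - 1))) :=
  theta_maps_D1_to_D2_and_preserves_objective_general n ξ L hL s h x l hx hxsum hl1 hl2
end

section
/- The map θ from D1(ξ,ℓ) to D2(ξ) is surjective: for every (x⁰,x¹) ∈ D2(ξ) there exists (x,l) ∈ D1(ξ,ℓ) with θ(x,l) = (x⁰,x¹); in fact one may take xᵢ = x⁰ᵢ + x¹ᵢ and lᵢ = (x⁰ᵢ + ℓᵢ·x¹ᵢ)/(x⁰ᵢ + x¹ᵢ) whenever x⁰ᵢ + x¹ᵢ > 0, and xᵢ = 0, lᵢ = 1 otherwise. -/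
/-!
A position split into `x⁰ᵢ` unlevered and `x¹ᵢ` fully levered capital is the same as the total
`xᵢ = x⁰ᵢ + x¹ᵢ` at the capital-weighted average leverage `lᵢ = (x⁰ᵢ · 1 + x¹ᵢ · ℓᵢ) / xᵢ`.
Since `xᵢ lᵢ = x⁰ᵢ + ℓᵢ x¹ᵢ`, the two components of `θ` are recovered by solving this linear
relation together with `xᵢ = x⁰ᵢ + x¹ᵢ`; the average lies between `1` and `ℓᵢ` because the weights
are nonnegative.
-/

namespace Leverage

noncomputable def average (L a b : ℝ) : ℝ :=
  if 0 < a + b then (a + L * b) / (a + b) else 1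

variable {L a b : ℝ}

theorem one_le_average (hL : 1 ≤ L) (hb : 0 ≤ b) : 1 ≤ average L a b := by
  unfold average
  split_ifs with h
  · rw [le_div_iff₀ h]
    nlinarith
  · exact le_rfl

theorem average_le (hL : 1 ≤ L) (ha : 0 ≤ a) : average L a b ≤ L := by
  unfold average
  split_ifs with h
  · rw [div_le_iff₀ h]
    nlinarith
  · exact hL

theorem add_mul_average (ha : 0 ≤ a) (hb : 0 ≤ b) : (a + b) * average L a b = a + L * b := by
  unfold average
  split_ifs with h
  · exact mul_div_cancel₀ _ h.ne'
  · obtain ⟨rfl, rfl⟩ : a = 0 ∧ b = 0 := ⟨by linarith, by linarith⟩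
    simp

theorem add_mul_sub_average_div (hL : L ≠ 1) (ha : 0 ≤ a) (hb : 0 ≤ b) :
    (a + b) * (L - average L a b) / (L - 1) = a := by
  have hL' : L - 1 ≠ 0 := sub_ne_zero.mpr hL
  rw [div_eq_iff hL', mul_sub, add_mul_average ha hb]
  ring

theorem add_mul_average_sub_div (hL : L ≠ 1) (ha : 0 ≤ a) (hb : 0 ≤ b) :
    (a + b) * (average L a b - 1) / (L - 1) = b := by
  have hL' : L - 1 ≠ 0 := sub_ne_zero.mpr hL
  rw [div_eq_iff hL', mul_sub, add_mul_average ha hb]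
  ring

end Leverage

open Leverage in
theorem theta_surjective_onto_D2_general
    (n : ℕ) (ξ : ℝ)
    (L : Fin n → ℝ) (hL : ∀ i, 1 < L i)
    (x0 x1 : Fin n → ℝ)
    (h0 : ∀ i, 0 ≤ x0 i) (h1 : ∀ i, 0 ≤ x1 i)
    (hsum : (∑ i, x0 i) + (∑ i, x1 i) = ξ) :
    let x : Fin n → ℝ := fun i => x0 i + x1 i
    let l : Fin n → ℝ := fun i =>
      if 0 < x0 i + x1 i then (x0 i + L i * x1 i) / (x0 i + x1 i) else 1
    -- (x, l) ∈ D1(ξ,ℓ):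
    ((∀ i, 0 ≤ x i) ∧ (∑ i, x i = ξ) ∧ (∀ i, 1 ≤ l i) ∧ (∀ i, l i ≤ L i)) ∧
    -- and θ(x,l) = (x⁰, x¹):
    (∀ i, x i * (L i - l i) / (L i - 1) = x0 i) ∧
    (∀ i, x i * (l i - 1) / (L i - 1) = x1 i) := by
  intro x l
  refine ⟨⟨fun i => add_nonneg (h0 i) (h1 i), ?_, fun i => ?_, fun i => ?_⟩,
    fun i => ?_, fun i => ?_⟩
  · rw [← hsum, ← Finset.sum_add_distrib]
  · exact one_le_average (hL i).le (h1 i)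
  · exact average_le (hL i).le (h0 i)
  · exact add_mul_sub_average_div (hL i).ne' (h0 i) (h1 i)
  · exact add_mul_average_sub_div (hL i).ne' (h0 i) (h1 i)

/-- θ : D1(ξ,ℓ) → D2(ξ) is surjective, with explicit preimage
xᵢ = x⁰ᵢ + x¹ᵢ and lᵢ = (x⁰ᵢ + ℓᵢ·x¹ᵢ)/(x⁰ᵢ + x¹ᵢ) (when x⁰ᵢ + x¹ᵢ > 0, and lᵢ = 1 otherwise). -/
theorem theta_surjective_onto_D2
    (n : ℕ) (hn : 1 ≤ n) (ξ : ℝ) (hξ : 0 < ξ)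
    (L : Fin n → ℝ) (hL : ∀ i, 1 < L i)
    (x0 x1 : Fin n → ℝ)
    (h0 : ∀ i, 0 ≤ x0 i) (h1 : ∀ i, 0 ≤ x1 i)
    (hsum : (∑ i, x0 i) + (∑ i, x1 i) = ξ) :
    let x : Fin n → ℝ := fun i => x0 i + x1 i
    let l : Fin n → ℝ := fun i =>
      if 0 < x0 i + x1 i then (x0 i + L i * x1 i) / (x0 i + x1 i) else 1
    -- (x, l) ∈ D1(ξ,ℓ):
    ((∀ i, 0 ≤ x i) ∧ (∑ i, x i = ξ) ∧ (∀ i, 1 ≤ l i) ∧ (∀ i, l i ≤ L i)) ∧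
    -- and θ(x,l) = (x⁰, x¹):
    (∀ i, x i * (L i - l i) / (L i - 1) = x0 i) ∧
    (∀ i, x i * (l i - 1) / (L i - 1) = x1 i) :=
  theta_surjective_onto_D2_general n ξ L hL x0 x1 h0 h1 hsum
end

section
/- The restriction of θ to the positive part of D1 is a bijection onto the positive part of D2: θ maps {(x,l) ∈ D1(ξ,ℓ) : xᵢ > 0 for all i} bijectively onto {(x⁰,x¹) ∈ D2(ξ) : x⁰ᵢ + x¹ᵢ > 0 for all i}, with inverse given componentwise by (x⁰ᵢ, x¹ᵢ) ↦ (x⁰ᵢ + x¹ᵢ, (x⁰ᵢ + ℓᵢ·x¹ᵢ)/(x⁰ᵢ + x¹ᵢ)). -/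
/-- θ restricts to a bijection from the positive part of D1(ξ,ℓ) onto the
positive part of D2(ξ), with inverse (x⁰ᵢ,x¹ᵢ) ↦ (x⁰ᵢ+x¹ᵢ, (x⁰ᵢ+ℓᵢ·x¹ᵢ)/(x⁰ᵢ+x¹ᵢ)). -/
theorem theta_bijection_on_positive_parts
    (n : ℕ) (hn : 1 ≤ n) (ξ : ℝ) (hξ : 0 < ξ)
    (L : Fin n → ℝ) (hL : ∀ i, 1 < L i) :
    let θ : (Fin n → ℝ) × (Fin n → ℝ) → (Fin n → ℝ) × (Fin n → ℝ) :=
      fun p => (fun i => p.1 i * (L i - p.2 i) / (L i - 1),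
                fun i => p.1 i * (p.2 i - 1) / (L i - 1))
    let ψ : (Fin n → ℝ) × (Fin n → ℝ) → (Fin n → ℝ) × (Fin n → ℝ) :=
      fun q => (fun i => q.1 i + q.2 i,
                fun i => (q.1 i + L i * q.2 i) / (q.1 i + q.2 i))
    let D1pos : Set ((Fin n → ℝ) × (Fin n → ℝ)) :=
      {p | (∀ i, 0 ≤ p.1 i) ∧ (∑ i, p.1 i = ξ) ∧
           (∀ i, 1 ≤ p.2 i) ∧ (∀ i, p.2 i ≤ L i) ∧ (∀ i, 0 < p.1 i)}
    let D2pos : Set ((Fin n → ℝ) × (Fin n → ℝ)) :=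
      {q | (∀ i, 0 ≤ q.1 i) ∧ (∀ i, 0 ≤ q.2 i) ∧
           ((∑ i, q.1 i) + (∑ i, q.2 i) = ξ) ∧ (∀ i, 0 < q.1 i + q.2 i)}
    Set.BijOn θ D1pos D2pos ∧ Set.InvOn ψ θ D1pos D2pos := by
  intro θ ψ D1pos D2pos
  have hLpos : ∀ i, (0:ℝ) < L i - 1 := fun i => sub_pos.2 (hL i)
  have hLne : ∀ i, L i - 1 ≠ 0 := fun i => (hLpos i).ne'
  -- key identity
  have key : ∀ (x l : Fin n → ℝ) (i : Fin n),
      x i * (L i - l i) / (L i - 1) + x i * (l i - 1) / (L i - 1) = x i := by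
    intro x l i
    rw [← add_div, show x i * (L i - l i) + x i * (l i - 1) = x i * (L i - 1) by ring,
      mul_div_assoc, div_self (hLne i), mul_one]
  have hmt1 : Set.MapsTo θ D1pos D2pos := by
    rintro ⟨x, l⟩ ⟨hx0, hsum, hl1, hl2, hxpos⟩
    refine ⟨fun i => div_nonneg (mul_nonneg (hx0 i) (sub_nonneg.2 (hl2 i))) (hLpos i).le,
      fun i => div_nonneg (mul_nonneg (hx0 i) (sub_nonneg.2 (hl1 i))) (hLpos i).le, ?_, ?_⟩
    · rw [← Finset.sum_add_distrib]
      rw [show (∑ i, (x i * (L i - l i) / (L i - 1) + x i * (l i - 1) / (L i - 1))) = ∑ i, x i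
          from Finset.sum_congr rfl fun i _ => key x l i]
      exact hsum
    · intro i
      have := key x l i
      simp only [θ]
      rw [this]
      exact hxpos i
  have hmt2 : Set.MapsTo ψ D2pos D1pos := by
    rintro ⟨a, b⟩ ⟨ha, hb, hsum, hpos⟩
    refine ⟨fun i => (hpos i).le, ?_, ?_, ?_, hpos⟩
    · rw [Finset.sum_add_distrib]; exact hsum
    · intro i
      rw [le_div_iff₀ (hpos i), one_mul]
      have : b i ≤ L i * b i := le_mul_of_one_le_left (hb i) (hL i).le
      linarith
    · intro i
      rw [div_le_iff₀ (hpos i)]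
      have : a i ≤ L i * a i := le_mul_of_one_le_left (ha i) (hL i).le
      nlinarith [hb i, hL i]
  have hli : Set.LeftInvOn ψ θ D1pos := by
    rintro ⟨x, l⟩ ⟨hx0, hsum, hl1, hl2, hxpos⟩
    have hxne : ∀ i, x i ≠ 0 := fun i => (hxpos i).ne'
    simp only [ψ, θ]
    refine Prod.ext (funext fun i => ?_) (funext fun i => ?_)
    · exact key x l i
    · show (_ + _) / (_ + _) = l i
      rw [key x l i]
      rw [div_eq_iff (hxne i)]
      field_simp [hLne i]
      ring
  have hri : Set.RightInvOn ψ θ D2pos := by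
    rintro ⟨a, b⟩ ⟨ha, hb, hsum, hpos⟩
    have hne : ∀ i, a i + b i ≠ 0 := fun i => (hpos i).ne'
    simp only [ψ, θ]
    refine Prod.ext (funext fun i => ?_) (funext fun i => ?_)
    · field_simp [hne i, hLne i]
      ring
    · field_simp [hne i, hLne i]
      ring
  have hinv : Set.InvOn ψ θ D1pos D2pos := ⟨hli, hri⟩
  exact ⟨hinv.bijOn hmt1 hmt2, hinv⟩
end

section
/- The two allocation problems have the same optimal value: the supremum of F1 over D1(ξ,ℓ) equals the supremum of F2 over D2(ξ). -/
/-- The two allocation problems have the same optimal value: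
sup of F1 over D1(ξ,ℓ) equals sup of F2 over D2(ξ). -/
theorem sup_F1_eq_sup_F2
    (n : ℕ) (hn : 1 ≤ n) (ξ : ℝ) (hξ : 0 < ξ)
    (L : Fin n → ℝ) (hL : ∀ i, 1 < L i)
    (s : ℝ) (h : Fin n → ℝ → ℝ) :
    let D1 : Set ((Fin n → ℝ) × (Fin n → ℝ)) :=
      {p | (∀ i, 0 ≤ p.1 i) ∧ (∑ i, p.1 i = ξ) ∧
           (∀ i, 1 ≤ p.2 i) ∧ (∀ i, p.2 i ≤ L i)}
    let D2 : Set ((Fin n → ℝ) × (Fin n → ℝ)) :=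
      {q | (∀ i, 0 ≤ q.1 i) ∧ (∀ i, 0 ≤ q.2 i) ∧
           ((∑ i, q.1 i) + (∑ i, q.2 i) = ξ)}
    let F1 : (Fin n → ℝ) × (Fin n → ℝ) → ℝ :=
      fun p => s * (∑ i, p.1 i * p.2 i) - ∑ i, h i (p.1 i * (p.2 i - 1))
    let F2 : (Fin n → ℝ) × (Fin n → ℝ) → ℝ :=
      fun q => s * (∑ i, q.1 i) + s * (∑ i, q.2 i * L i)
        - ∑ i, h i (q.2 i * (L i - 1))
    sSup (F1 '' D1) = sSup (F2 '' D2) := by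
  intro D1 D2 F1 F2
  have hLpos : ∀ i, (0:ℝ) < L i - 1 := fun i => by linarith [hL i]
  have hLne : ∀ i, L i - 1 ≠ 0 := fun i => ne_of_gt (hLpos i)
  suffices hset : F1 '' D1 = F2 '' D2 by rw [hset]
  apply Set.Subset.antisymm
  · rintro y ⟨⟨x, l⟩, ⟨hx, hsum, hl1, hl2⟩, rfl⟩
    refine ⟨⟨fun i => x i * (L i - l i) / (L i - 1),
             fun i => x i * (l i - 1) / (L i - 1)⟩, ⟨?_, ?_, ?_⟩, ?_⟩
    · intro i
      exact div_nonneg (mul_nonneg (hx i) (by linarith [hl2 i])) (le_of_lt (hLpos i))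
    · intro i
      exact div_nonneg (mul_nonneg (hx i) (by linarith [hl1 i])) (le_of_lt (hLpos i))
    · rw [← Finset.sum_add_distrib, ← hsum]
      apply Finset.sum_congr rfl
      intro i _
      rw [← add_div, div_eq_iff (hLne i)]
      ring
    · simp only [F1, F2]
      have h2 : ∀ i, x i * (l i - 1) / (L i - 1) * (L i - 1) = x i * (l i - 1) := by
        intro i; exact div_mul_cancel₀ _ (hLne i)
      have hs : (∑ i, x i * (L i - l i) / (L i - 1)) + (∑ i, x i * (l i - 1) / (L i - 1) * L i)
          = ∑ i, x i * l i := by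
        rw [← Finset.sum_add_distrib]
        apply Finset.sum_congr rfl
        intro i _
        rw [div_mul_eq_mul_div, ← add_div, div_eq_iff (hLne i)]
        ring
      simp only [h2]
      rw [show s * (∑ i, x i * (L i - l i) / (L i - 1))
            + s * (∑ i, x i * (l i - 1) / (L i - 1) * L i)
          = s * ((∑ i, x i * (L i - l i) / (L i - 1))
            + (∑ i, x i * (l i - 1) / (L i - 1) * L i)) by ring, hs]
  · rintro y ⟨⟨a, b⟩, ⟨ha, hb, hsum⟩, rfl⟩
    refine ⟨⟨fun i => a i + b i,
             fun i => if a i + b i = 0 then 1 else 1 + b i * (L i - 1) / (a i + b i)⟩,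
            ⟨?_, ?_, ?_, ?_⟩, ?_⟩
    · intro i; exact add_nonneg (ha i) (hb i)
    · rw [← hsum, ← Finset.sum_add_distrib]
    · intro i
      by_cases hz : a i + b i = 0
      · simp [hz]
      · simp only [hz, if_false]
        have hpos : 0 < a i + b i := lt_of_le_of_ne (add_nonneg (ha i) (hb i)) (Ne.symm hz)
        have : 0 ≤ b i * (L i - 1) / (a i + b i) :=
          div_nonneg (mul_nonneg (hb i) (le_of_lt (hLpos i))) (le_of_lt hpos)
        linarith
    · intro i
      by_cases hz : a i + b i = 0
      · simp only [hz, if_true]; linarith [hL i]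
      · simp only [hz, if_false]
        have hpos : 0 < a i + b i := lt_of_le_of_ne (add_nonneg (ha i) (hb i)) (Ne.symm hz)
        have hble : b i ≤ a i + b i := by linarith [ha i]
        have h3 : b i * (L i - 1) / (a i + b i) ≤ L i - 1 := by
          rw [div_le_iff₀ hpos]
          calc b i * (L i - 1) ≤ (a i + b i) * (L i - 1) :=
                mul_le_mul_of_nonneg_right hble (le_of_lt (hLpos i))
            _ = (L i - 1) * (a i + b i) := by ring
        linarith
    · simp only [F1, F2]
      have key1 : ∀ i, (a i + b i) *
          (if a i + b i = 0 then 1 else 1 + b i * (L i - 1) / (a i + b i))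
          = a i + b i * L i := by
        intro i
        by_cases hz : a i + b i = 0
        · have hb0 : b i = 0 := by
            have := ha i; have := hb i; linarith
          simp [hz, hb0]
        · simp only [hz, if_false]
          rw [mul_add, mul_one, mul_div_cancel₀ _ hz]
          ring
      have key2 : ∀ i, (a i + b i) *
          ((if a i + b i = 0 then 1 else 1 + b i * (L i - 1) / (a i + b i)) - 1)
          = b i * (L i - 1) := by
        intro i
        by_cases hz : a i + b i = 0
        · have hb0 : b i = 0 := by
            have := ha i; have := hb i; linarith
          simp [hz, hb0]
        · simp only [hz, if_false, add_sub_cancel_left]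
          exact mul_div_cancel₀ _ hz
      simp only [key1, key2]
      rw [Finset.sum_add_distrib, mul_add]
end

section
/- If each borrow-rate function bᵢ : ℝ → ℝ is convex and monotone nondecreasing on [0,∞), each ℓᵢ ≥ 1, and s ∈ ℝ, then the allocation objective G(x₀, x₁, …, x_n) = x₀·s + Σᵢ xᵢ·ℓᵢ·s − Σᵢ xᵢ·(ℓᵢ − 1)·bᵢ(xᵢ·(ℓᵢ − 1)) is a concave function on the nonnegative orthant {(x₀,…,x_n) ∈ ℝ^{n+1} : xᵢ ≥ 0 for all i}. -/
/-!
If `b` is convex and nondecreasing on `[0, ∞)`, then `y ↦ y * b y` is convex there: Jensen for `b`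
bounds `(a x + c y) b(a x + c y)` by `(a x + c y)(a b x + c b y)`, which differs from
`a x b x + c y b y` by `-a c (y - x)(b y - b x) ≤ 0` since `b` is nondecreasing. The borrowing cost
is a sum of such functions composed with the linear maps `p ↦ p.2 i * (ℓᵢ - 1)`, which send the
orthant into `[0, ∞)` because `ℓᵢ ≥ 1`, so it is convex; the staking return is linear.
-/

open Finset

theorem ConvexOn.id_mul_of_monotoneOn {𝕜 : Type*} [Field 𝕜] [LinearOrder 𝕜]
    [IsStrictOrderedRing 𝕜] {s : Set 𝕜} {f : 𝕜 → 𝕜} (hf : ConvexOn 𝕜 s f)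
    (hmono : MonotoneOn f s) (hs : ∀ x ∈ s, 0 ≤ x) : ConvexOn 𝕜 s (fun x => x * f x) := by
  refine ⟨hf.1, fun x hx y hy a c ha hc hac => ?_⟩
  simp only [smul_eq_mul]
  have hxy_nonneg : 0 ≤ a * x + c * y := by
    have := hs x hx; have := hs y hy; positivity
  have hjensen : f (a * x + c * y) ≤ a * f x + c * f y := hf.2 hx hy ha hc hac
  have hcov : 0 ≤ (y - x) * (f y - f x) := by
    rcases le_total x y with h | h
    · exact mul_nonneg (sub_nonneg.2 h) (sub_nonneg.2 (hmono hx hy h))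
    · exact mul_nonneg_of_nonpos_of_nonpos (sub_nonpos.2 h) (sub_nonpos.2 (hmono hy hx h))
  obtain rfl : c = 1 - a := by linarith
  calc (a * x + (1 - a) * y) * f (a * x + (1 - a) * y)
      ≤ (a * x + (1 - a) * y) * (a * f x + (1 - a) * f y) :=
        mul_le_mul_of_nonneg_left hjensen hxy_nonneg
    _ = a * (x * f x) + (1 - a) * (y * f y) - a * (1 - a) * ((y - x) * (f y - f x)) := by ring
    _ ≤ a * (x * f x) + (1 - a) * (y * f y) := by
        have := mul_nonneg (mul_nonneg ha hc) hcov; linarith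

theorem ConvexOn.sum {𝕜 E β ι : Type*} [Semiring 𝕜] [PartialOrder 𝕜] [AddCommMonoid E]
    [AddCommMonoid β] [PartialOrder β] [IsOrderedAddMonoid β] [SMul 𝕜 E] [Module 𝕜 β]
    {s : Set E} {t : Finset ι} {f : ι → E → β} (hs : Convex 𝕜 s)
    (hf : ∀ i ∈ t, ConvexOn 𝕜 s (f i)) : ConvexOn 𝕜 s (fun x => ∑ i ∈ t, f i x) := by
  classical
  induction t using Finset.induction_on with
  | empty => simpa using convexOn_const (0 : β) hs
  | insert j t hj ih =>
    simp only [Finset.sum_insert hj]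
    exact (hf j (mem_insert_self j t)).add (ih fun i hi => hf i (mem_insert_of_mem hi))

theorem allocation_objective_concave_general
    (n : ℕ)
    (b : Fin n → ℝ → ℝ)
    (hconv : ∀ i, ConvexOn ℝ (Set.Ici (0 : ℝ)) (b i))
    (hmono : ∀ i, MonotoneOn (b i) (Set.Ici (0 : ℝ)))
    (L : Fin n → ℝ) (hL : ∀ i, 1 ≤ L i) (s : ℝ) :
    ConcaveOn ℝ {p : ℝ × (Fin n → ℝ) | 0 ≤ p.1 ∧ ∀ i, 0 ≤ p.2 i}
      (fun p => p.1 * s + (∑ i, p.2 i * L i * s)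
        - ∑ i, p.2 i * (L i - 1) * b i (p.2 i * (L i - 1))) := by
  -- The orthant is `Set.Ici 0` for the product order.
  have horthant : Convex ℝ {p : ℝ × (Fin n → ℝ) | 0 ≤ p.1 ∧ ∀ i, 0 ≤ p.2 i} := convex_Ici 0
  let coord (i : Fin n) : ℝ × (Fin n → ℝ) →ₗ[ℝ] ℝ := LinearMap.proj i ∘ₗ LinearMap.snd ℝ ℝ _
  have hreturn : ConcaveOn ℝ {p : ℝ × (Fin n → ℝ) | 0 ≤ p.1 ∧ ∀ i, 0 ≤ p.2 i}
      (fun p => p.1 * s + ∑ i, p.2 i * L i * s) := by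
    refine ((LinearMap.fst ℝ ℝ _).smulRight s
      + ∑ i, ((coord i).smulRight (L i)).smulRight s).concaveOn horthant |>.congr ?_
    intro p _
    simp [coord, LinearMap.sum_apply]
  have hcost : ConvexOn ℝ {p : ℝ × (Fin n → ℝ) | 0 ≤ p.1 ∧ ∀ i, 0 ≤ p.2 i}
      (fun p => ∑ i, p.2 i * (L i - 1) * b i (p.2 i * (L i - 1))) := by
    refine ConvexOn.sum horthant fun i _ => ?_
    refine (((hconv i).id_mul_of_monotoneOn (hmono i) fun _ hx => hx).comp_linearMap
      ((coord i).smulRight (L i - 1))).subset (fun p hp => ?_) horthant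
    exact mul_nonneg (hp.2 i) (sub_nonneg.2 (hL i))
  exact hreturn.sub hcost

/-- With convex, nondecreasing borrow-rate functions bᵢ on [0,∞), ℓᵢ ≥ 1 and
s ∈ ℝ, the allocation objective
G(x₀,x) = x₀·s + Σᵢ xᵢ·ℓᵢ·s − Σᵢ xᵢ·(ℓᵢ−1)·bᵢ(xᵢ·(ℓᵢ−1))
is concave on the nonnegative orthant. -/
theorem allocation_objective_concave
    (n : ℕ) (hn : 1 ≤ n)
    (b : Fin n → ℝ → ℝ)
    (hconv : ∀ i, ConvexOn ℝ (Set.Ici (0 : ℝ)) (b i))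
    (hmono : ∀ i, MonotoneOn (b i) (Set.Ici (0 : ℝ)))
    (L : Fin n → ℝ) (hL : ∀ i, 1 ≤ L i) (s : ℝ) :
    ConcaveOn ℝ {p : ℝ × (Fin n → ℝ) | 0 ≤ p.1 ∧ ∀ i, 0 ≤ p.2 i}
      (fun p => p.1 * s + (∑ i, p.2 i * L i * s)
        - ∑ i, p.2 i * (L i - 1) * b i (p.2 i * (L i - 1))) :=
  allocation_objective_concave_general n b hconv hmono L hL s
end

section
/- Under the linear rate model, for every λ ∈ ℝ the point x*(λ) = α·max(β − λ, 0) is the unique maximizer over [0,∞) of the per-market objective f(x) = x·ℓ·s − x·(ℓ−1)·b(x·(ℓ−1)) − λ·x. -/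
/-- Under the linear rate model, for every λ ∈ ℝ the point
x*(λ) = α·max(β − λ, 0) is the unique maximizer over [0,∞) of
f(x) = x·ℓ·s − x·(ℓ−1)·b(x·(ℓ−1)) − λ·x. -/
theorem linear_rate_unique_maximizer
    (s ℓ lam Sbar Bbar us rbase rslope1 : ℝ)
    (hℓ : 1 < ℓ) (hS : 0 < Sbar) (hB : 0 ≤ Bbar)
    (hus0 : 0 < us) (hus1 : us < 1) (hrb : 0 ≤ rbase) (hr1 : 0 < rslope1) :
    let b : ℝ → ℝ := fun B => rbase + (Bbar + B) / (Sbar * us) * rslope1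
    let f : ℝ → ℝ := fun x => x * ℓ * s - x * (ℓ - 1) * b (x * (ℓ - 1)) - lam * x
    let α : ℝ := Sbar * us / (2 * rslope1 * (ℓ - 1) ^ 2)
    let β : ℝ := ℓ * s - (ℓ - 1) * (rbase + Bbar / (Sbar * us) * rslope1)
    let xstar : ℝ := α * max (β - lam) 0
    0 ≤ xstar ∧ ∀ y ∈ Set.Ici (0 : ℝ), y ≠ xstar → f y < f xstar := by
  intro b f α β xstar
  have hSu : (0:ℝ) < Sbar * us := mul_pos hS hus0
  have hSu' : Sbar * us ≠ 0 := ne_of_gt hSu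
  have hℓ1 : (0:ℝ) < ℓ - 1 := by linarith
  have hℓ1' : ℓ - 1 ≠ 0 := ne_of_gt hℓ1
  have hr1' : rslope1 ≠ 0 := ne_of_gt hr1
  set C : ℝ := rslope1 * (ℓ - 1)^2 / (Sbar * us) with hCdef
  have hC : 0 < C := div_pos (mul_pos hr1 (pow_pos hℓ1 2)) hSu
  have hrep : ∀ x, f x = (β - lam) * x - C * x^2 := by
    intro x
    simp only [f, b, β, hCdef]
    field_simp
    ring
  have hCx : 2 * C * xstar = max (β - lam) 0 := by
    simp only [xstar, α, hCdef]
    field_simp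
  constructor
  · exact mul_nonneg (le_of_lt (div_pos hSu (by positivity))) (le_max_right _ _)
  · intro y hy hne
    have hy0 : (0:ℝ) ≤ y := hy
    have key : f xstar - f y = C*(y - xstar)^2 + (y - xstar)*(2*C*xstar - (β - lam)) := by
      rw [hrep, hrep]; ring
    have hysub : y - xstar ≠ 0 := sub_ne_zero.mpr hne
    have h1 : 0 < C*(y - xstar)^2 := by positivity
    have h2 : 0 ≤ (y - xstar)*(2*C*xstar - (β - lam)) := by
      rcases le_or_gt (β - lam) 0 with h | h
      · have hx0 : xstar = 0 := by
          simp only [xstar]; rw [max_eq_right h]; ring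
        rw [hx0] at hCx ⊢
        rw [hCx, max_eq_right h]
        nlinarith
      · rw [hCx, max_eq_left h.le]
        simp
    linarith
end

section
/- In the water-filling problem with n markets, suppose α₁,…,α_n > 0, β₁ ≥ β₂ ≥ … ≥ β_n, and ξ > 0. Define φ_k = Σ_{j=1}^{k} α_j·(β_j − β_k) for k = 1,…,n, and suppose k ∈ {1,…,n} satisfies φ_k < ξ and (ξ ≤ φ_{k+1} if k < n). Then λ* = (Σ_{j=1}^{k} α_j·β_j − ξ)/(Σ_{j=1}^{k} α_j) satisfies λ* < β_k, β_{k+1} ≤ λ* (when k < n), and the budget identity Σ_{i=1}^{n} α_i·max(β_i − λ*, 0) = ξ. -/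
/-- Water-filling with sorted coefficients. With α_i > 0, β nonincreasing,
ξ > 0, φ_k = Σ_{j ≤ k} α_j (β_j − β_k), if φ_k < ξ and (ξ ≤ φ_{k+1} when k < n), then
λ* = (Σ_{j ≤ k} α_j β_j − ξ)/(Σ_{j ≤ k} α_j) satisfies λ* < β_k, β_{k+1} ≤ λ* (when k < n),
and Σ_i α_i max(β_i − λ*, 0) = ξ. -/
theorem water_filling_optimal_multiplier
    (n : ℕ) (α β : Fin n → ℝ)
    (hα : ∀ i, 0 < α i)
    (hsorted : ∀ i j : Fin n, i ≤ j → β j ≤ β i)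
    (ξ : ℝ) (hξ : 0 < ξ)
    (k : Fin n)
    (hφk : ∑ j ∈ Finset.Iic k, α j * (β j - β k) < ξ)
    (hφk1 : ∀ hk : (k : ℕ) + 1 < n,
      ξ ≤ ∑ j ∈ Finset.Iic (⟨(k : ℕ) + 1, hk⟩ : Fin n),
        α j * (β j - β (⟨(k : ℕ) + 1, hk⟩ : Fin n))) :
    let lam : ℝ := ((∑ j ∈ Finset.Iic k, α j * β j) - ξ) / (∑ j ∈ Finset.Iic k, α j)
    lam < β k ∧
    (∀ hk : (k : ℕ) + 1 < n, β (⟨(k : ℕ) + 1, hk⟩ : Fin n) ≤ lam) ∧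
    ∑ i, α i * max (β i - lam) 0 = ξ := by
  intro lam
  set A : ℝ := ∑ j ∈ Finset.Iic k, α j with hAdef
  set S : ℝ := ∑ j ∈ Finset.Iic k, α j * β j with hSdef
  have hA : 0 < A := Finset.sum_pos (fun i _ => hα i) ⟨k, Finset.mem_Iic.2 le_rfl⟩
  have hexp : ∀ c : ℝ, ∑ j ∈ Finset.Iic k, α j * (β j - c) = S - A * c := by
    intro c
    simp only [mul_sub, Finset.sum_sub_distrib, hSdef, hAdef, Finset.sum_mul]
  -- first claim
  have h1 : lam < β k := by
    rw [hexp (β k)] at hφk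
    rw [div_lt_iff₀ hA]
    linarith
  -- second claim
  have h2 : ∀ hk : (k : ℕ) + 1 < n, β (⟨(k : ℕ) + 1, hk⟩ : Fin n) ≤ lam := by
    intro hk
    set k' : Fin n := ⟨(k : ℕ) + 1, hk⟩ with hk'def
    have hkk' : k < k' := by simp [Fin.lt_def, hk'def]
    have hIic : Finset.Iic k' = insert k' (Finset.Iic k) := by
      ext i
      simp only [Finset.mem_Iic, Finset.mem_insert, Fin.le_def, Fin.ext_iff, hk'def]
      omega
    have hs : ∑ j ∈ Finset.Iic k', α j * (β j - β k')
        = ∑ j ∈ Finset.Iic k, α j * (β j - β k') := by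
      rw [hIic, Finset.sum_insert (s := Finset.Iic k) (a := k') (by rw [Finset.mem_Iic]; exact not_le.2 hkk')]
      simp
    have := hφk1 hk
    rw [hs, hexp (β k')] at this
    rw [le_div_iff₀ hA]
    linarith
  refine ⟨h1, h2, ?_⟩
  -- budget identity
  have hzero : ∀ i ∈ Finset.univ, i ∉ Finset.Iic k → α i * max (β i - lam) 0 = 0 := by
    intro i _ hi
    have hik : (k : ℕ) + 1 ≤ (i : ℕ) := by
      simp only [Finset.mem_Iic, Fin.le_def, not_le] at hi; omega
    have hk : (k : ℕ) + 1 < n := lt_of_le_of_lt hik i.isLt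
    have hβ : β i ≤ β (⟨(k : ℕ) + 1, hk⟩ : Fin n) := hsorted _ i hik
    have : max (β i - lam) 0 = 0 := by
      have := h2 hk
      exact max_eq_right (by linarith)
    rw [this, mul_zero]
  have hmain : ∑ i, α i * max (β i - lam) 0
      = ∑ i ∈ Finset.Iic k, α i * (β i - lam) := by
    rw [← Finset.sum_subset (Finset.subset_univ (Finset.Iic k)) hzero]
    refine Finset.sum_congr rfl fun i hi => ?_
    have hβ : β k ≤ β i := hsorted i k (Finset.mem_Iic.1 hi)
    rw [max_eq_left (by linarith)]
  rw [hmain, hexp lam]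
  have : A * lam = S - ξ := by
    rw [show lam = (S - ξ) / A from rfl]
    field_simp
  linarith
end

section
/- Consider n markets, each with a linear rate model b_i (parameters S̄_i > 0, B̄_i ≥ 0, shared u* ∈ (0,1), r_base ≥ 0, r_slope1 > 0), maximum leverage ℓ_i > 1, and staking rate s ∈ ℝ; let α_i = S̄_i·u*/(2·r_slope1·(ℓ_i−1)²) and β_i = ℓ_i·s − (ℓ_i−1)·(r_base + (B̄_i/(S̄_i·u*))·r_slope1). If λ* ∈ ℝ satisfies Σ_{i=1}^{n} α_i·max(β_i − λ*, 0) = ξ, then the allocation x*_i = α_i·max(β_i − λ*, 0) maximizes Σ_{i=1}^{n} [x_i·ℓ_i·s − x_i·(ℓ_i−1)·b_i(x_i·(ℓ_i−1))] over the simplex {x ∈ ℝⁿ : x_i ≥ 0 for all i, Σᵢ x_i = ξ}. -/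
private lemma quad_key (β lam c xs x : ℝ) (hc : 0 < c) (hx : 0 ≤ x)
    (hxs : 2 * c * xs = max (β - lam) 0) :
    β * x - c * x ^ 2 ≤ β * xs - c * xs ^ 2 + lam * (x - xs) := by
  rcases le_or_gt (β - lam) 0 with h | h
  · rw [max_eq_right h] at hxs
    have hxs0 : xs = 0 := by nlinarith
    subst hxs0
    nlinarith
  · rw [max_eq_left h.le] at hxs
    have hb : β = 2 * c * xs + lam := by linarith
    subst hb
    nlinarith [mul_nonneg hc.le (sq_nonneg (x - xs))]

/-- Linear rate model, unsaturated regime. If λ* satisfies the budget identity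
Σ_i α_i·max(β_i − λ*, 0) = ξ, then x*_i = α_i·max(β_i − λ*, 0) maximizes
Σ_i [x_i·ℓ_i·s − x_i·(ℓ_i−1)·b_i(x_i·(ℓ_i−1))] over the simplex
{x : x_i ≥ 0, Σ x_i = ξ}. -/
theorem linear_rate_allocation_optimal_unsaturated
    (n : ℕ) (hn : 0 < n)
    (Sbar Bbar : Fin n → ℝ) (us rbase rslope1 s ξ lam : ℝ)
    (hS : ∀ i, 0 < Sbar i) (hB : ∀ i, 0 ≤ Bbar i)
    (hus0 : 0 < us) (hus1 : us < 1) (hrb : 0 ≤ rbase) (hr1 : 0 < rslope1)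
    (L : Fin n → ℝ) (hL : ∀ i, 1 < L i) :
    let b : Fin n → ℝ → ℝ := fun i B => rbase + (Bbar i + B) / (Sbar i * us) * rslope1
    let α : Fin n → ℝ := fun i => Sbar i * us / (2 * rslope1 * (L i - 1) ^ 2)
    let β : Fin n → ℝ := fun i =>
      L i * s - (L i - 1) * (rbase + Bbar i / (Sbar i * us) * rslope1)
    let xstar : Fin n → ℝ := fun i => α i * max (β i - lam) 0
    (∑ i, α i * max (β i - lam) 0 = ξ) →
      (∀ i, 0 ≤ xstar i) ∧ (∑ i, xstar i = ξ) ∧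
      ∀ x : Fin n → ℝ, (∀ i, 0 ≤ x i) → (∑ i, x i = ξ) →
        ∑ i, (x i * L i * s - x i * (L i - 1) * b i (x i * (L i - 1)))
          ≤ ∑ i, (xstar i * L i * s - xstar i * (L i - 1) * b i (xstar i * (L i - 1))) := by
  intro b α β xstar hbudget
  set c : Fin n → ℝ := fun i => rslope1 * (L i - 1) ^ 2 / (Sbar i * us) with hcdef
  have hSus : ∀ i, (0:ℝ) < Sbar i * us := fun i => mul_pos (hS i) hus0
  have hLi : ∀ i, (0:ℝ) < L i - 1 := fun i => by linarith [hL i]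
  have hc : ∀ i, 0 < c i := fun i =>
    div_pos (mul_pos hr1 (pow_pos (hLi i) 2)) (hSus i)
  have hα : ∀ i, 0 < α i := fun i => by
    have : (0:ℝ) < 2 * rslope1 * (L i - 1) ^ 2 :=
      mul_pos (by positivity) (pow_pos (hLi i) 2)
    exact div_pos (hSus i) this
  have hxs : ∀ i, 2 * c i * xstar i = max (β i - lam) 0 := by
    intro i
    have h1 : 2 * c i * α i = 1 := by
      have h2 : Sbar i * us ≠ 0 := (hSus i).ne'
      have h3 : rslope1 ≠ 0 := hr1.ne'
      have h4 : L i - 1 ≠ 0 := (hLi i).ne'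
      have h5 : Sbar i ≠ 0 := (hS i).ne'
      have h6 : us ≠ 0 := hus0.ne'
      simp only [hcdef, α]
      field_simp
    show 2 * c i * (α i * max (β i - lam) 0) = _
    rw [← mul_assoc, h1, one_mul]
  have hobj : ∀ i (y : ℝ), y * L i * s - y * (L i - 1) * b i (y * (L i - 1))
      = β i * y - c i * y ^ 2 := by
    intro i y
    simp only [b, β, hcdef]
    field_simp
    ring
  have hxs0 : ∀ i, 0 ≤ xstar i := fun i =>
    mul_nonneg (hα i).le (le_max_right _ _)
  refine ⟨hxs0, hbudget, ?_⟩
  intro x hx hsum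
  have hkey : ∀ i ∈ Finset.univ, x i * L i * s - x i * (L i - 1) * b i (x i * (L i - 1))
      ≤ (xstar i * L i * s - xstar i * (L i - 1) * b i (xstar i * (L i - 1)))
        + lam * (x i - xstar i) := by
    intro i _
    rw [hobj i (x i), hobj i (xstar i)]
    exact quad_key _ _ _ _ _ (hc i) (hx i) (hxs i)
  calc ∑ i, (x i * L i * s - x i * (L i - 1) * b i (x i * (L i - 1)))
      ≤ ∑ i, ((xstar i * L i * s - xstar i * (L i - 1) * b i (xstar i * (L i - 1)))
          + lam * (x i - xstar i)) := Finset.sum_le_sum hkey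
    _ = ∑ i, (xstar i * L i * s - xstar i * (L i - 1) * b i (xstar i * (L i - 1)))
          + lam * (∑ i, x i - ∑ i, xstar i) := by
        rw [Finset.sum_add_distrib]
        congr 1
        rw [← Finset.mul_sum, Finset.sum_sub_distrib]
    _ = _ := by rw [hsum, hbudget]; simp
end

section
/- Consider n markets, each with a linear rate model b_i (parameters S̄_i > 0, B̄_i ≥ 0, shared u* ∈ (0,1), r_base ≥ 0, r_slope1 > 0), maximum leverage ℓ_i > 1, and staking rate s ∈ ℝ; let α_i = S̄_i·u*/(2·r_slope1·(ℓ_i−1)²) and β_i = ℓ_i·s − (ℓ_i−1)·(r_base + (B̄_i/(S̄_i·u*))·r_slope1). If Σ_{i=1}^{n} α_i·max(β_i − s, 0) ≤ ξ, then the allocation x*_i = α_i·max(β_i − s, 0) for i = 1,…,n together with x*₀ = ξ − Σ_{i=1}^{n} x*_i maximizes the objective x₀·s + Σ_{i=1}^{n} [x_i·ℓ_i·s − x_i·(ℓ_i−1)·b_i(x_i·(ℓ_i−1))] over {(x₀,x) ∈ ℝ^{n+1} : x₀ ≥ 0, x_i ≥ 0 for all i, x₀ + Σᵢ x_i = ξ}.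 -/
/-- Pointwise quadratic bound: the concave quadratic `c*x - x^2/(2a)` over `x ≥ 0`
is maximized at `x = a * max c 0`. -/
lemma linear_rate_keylem (a c x : ℝ) (ha : 0 < a) (hx : 0 ≤ x) :
    c * x - x ^ 2 / (2 * a) ≤ c * (a * max c 0) - (a * max c 0) ^ 2 / (2 * a) := by
  set m := max c 0 with hm
  have hm0 : 0 ≤ m := le_max_right _ _
  have hcm : c ≤ m := le_max_left _ _
  have hmm : c * m = m * m := by
    rcases le_total c 0 with h | h
    · simp [hm, max_eq_right h]
    · simp [hm, max_eq_left h]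
  have h2a : (0:ℝ) < 2 * a := by linarith
  have e1 : c * (a * m) - (a * m) ^ 2 / (2 * a) = a * (m * m) / 2 := by
    rw [mul_comm c, mul_assoc, mul_comm m c, hmm]
    field_simp
    ring
  rw [e1]
  have e2 : c * x - x ^ 2 / (2 * a) ≤ m * x - x ^ 2 / (2 * a) := by nlinarith
  refine e2.trans ?_
  rw [sub_le_iff_le_add, ← sub_le_iff_le_add', le_div_iff₀ h2a]
  nlinarith [sq_nonneg (a * m - x)]

/-- Linear rate model, saturated regime. If Σ_i α_i·max(β_i − s, 0) ≤ ξ,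
then x*_i = α_i·max(β_i − s, 0) together with x*₀ = ξ − Σ_i x*_i maximizes
x₀·s + Σ_i [x_i·ℓ_i·s − x_i·(ℓ_i−1)·b_i(x_i·(ℓ_i−1))] over
{(x₀,x) : x₀ ≥ 0, x_i ≥ 0, x₀ + Σ x_i = ξ}. -/
theorem linear_rate_allocation_optimal_saturated
    (n : ℕ) (hn : 0 < n)
    (Sbar Bbar : Fin n → ℝ) (us rbase rslope1 s ξ : ℝ)
    (hS : ∀ i, 0 < Sbar i) (hB : ∀ i, 0 ≤ Bbar i)
    (hus0 : 0 < us) (hus1 : us < 1) (hrb : 0 ≤ rbase) (hr1 : 0 < rslope1)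
    (L : Fin n → ℝ) (hL : ∀ i, 1 < L i) :
    let b : Fin n → ℝ → ℝ := fun i B => rbase + (Bbar i + B) / (Sbar i * us) * rslope1
    let α : Fin n → ℝ := fun i => Sbar i * us / (2 * rslope1 * (L i - 1) ^ 2)
    let β : Fin n → ℝ := fun i =>
      L i * s - (L i - 1) * (rbase + Bbar i / (Sbar i * us) * rslope1)
    let xstar : Fin n → ℝ := fun i => α i * max (β i - s) 0
    let xstar0 : ℝ := ξ - ∑ i, xstar i
    (∑ i, α i * max (β i - s) 0 ≤ ξ) →
      (0 ≤ xstar0) ∧ (∀ i, 0 ≤ xstar i) ∧ (xstar0 + ∑ i, xstar i = ξ) ∧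
      ∀ (x0 : ℝ) (x : Fin n → ℝ), 0 ≤ x0 → (∀ i, 0 ≤ x i) → (x0 + ∑ i, x i = ξ) →
        x0 * s + ∑ i, (x i * L i * s - x i * (L i - 1) * b i (x i * (L i - 1)))
          ≤ xstar0 * s
            + ∑ i, (xstar i * L i * s - xstar i * (L i - 1) * b i (xstar i * (L i - 1))) := by
  intro b α β xstar xstar0 hsum
  have hα : ∀ i, 0 < α i := by
    intro i
    have h1 : 0 < L i - 1 := by linarith [hL i]
    exact div_pos (mul_pos (hS i) hus0) (by positivity)
  have hxs : ∀ i, 0 ≤ xstar i := fun i =>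
    mul_nonneg (hα i).le (le_max_right _ _)
  have hid : ∀ i (y : ℝ),
      y * L i * s - y * (L i - 1) * b i (y * (L i - 1))
        = s * y + ((β i - s) * y - y ^ 2 / (2 * α i)) := by
    intro i y
    have h1 : Sbar i ≠ 0 := (hS i).ne'
    have h2 : us ≠ 0 := hus0.ne'
    have h3 : L i - 1 ≠ 0 := by have := hL i; intro h; linarith [sub_eq_zero.mp h]
    have h4 : rslope1 ≠ 0 := hr1.ne'
    simp only [b, α, β]
    field_simp
    ring
  refine ⟨by simpa [xstar0] using sub_nonneg.mpr hsum, hxs, by simp [xstar0], ?_⟩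
  intro x0 x hx0 hx hsx
  have hx0eq : x0 = ξ - ∑ i, x i := by linarith
  have e1 : x0 * s + ∑ i, (x i * L i * s - x i * (L i - 1) * b i (x i * (L i - 1)))
      = ξ * s + ∑ i, ((β i - s) * x i - (x i) ^ 2 / (2 * α i)) := by
    rw [Finset.sum_congr rfl (fun i _ => hid i (x i)), Finset.sum_add_distrib,
      ← Finset.mul_sum, hx0eq]
    ring
  have e2 : xstar0 * s
        + ∑ i, (xstar i * L i * s - xstar i * (L i - 1) * b i (xstar i * (L i - 1)))
      = ξ * s + ∑ i, ((β i - s) * xstar i - (xstar i) ^ 2 / (2 * α i)) := by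
    rw [Finset.sum_congr rfl (fun i _ => hid i (xstar i)), Finset.sum_add_distrib,
      ← Finset.mul_sum]
    simp only [xstar0]
    ring
  rw [e1, e2]
  refine add_le_add_right (Finset.sum_le_sum fun i _ => ?_) _
  simpa [xstar] using linear_rate_keylem (α i) (β i - s) (x i) (hα i) (hx i)
end

section
/- Under the kinked rate model with current utilization below target (S̄·u* − B̄ > 0) and r_slope1 < (u*/(1−u*))·r_slope2, for every λ ∈ ℝ the unique maximizer over [0,∞) of the per-market objective f(x) = x·ℓ·s − x·(ℓ−1)·b(x·(ℓ−1)) − λ·x is: x*(λ) = α²·max(β² − λ, 0) if λ < λ²; x*(λ) = (S̄·u* − B̄)/(ℓ−1) if λ² ≤ λ ≤ λ¹; and x*(λ) = α¹·max(β¹ − λ, 0) if λ¹ < λ. -/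
private lemma quad_vertex_max (A c y m : ℝ) (hA : 0 < A) (hm : 2 * A * m = c)
    (hy : y ≠ m) : c * y - A * y ^ 2 < c * m - A * m ^ 2 := by
  have h : (y - m) ≠ 0 := sub_ne_zero.mpr hy
  have h2 : 0 < (y - m) ^ 2 := by positivity
  have key : c * m - A * m ^ 2 - (c * y - A * y ^ 2) = A * (y - m) ^ 2 := by
    linear_combination (y - m) * hm
  nlinarith [mul_pos hA h2]

private lemma quad_mono (A c u v : ℝ) (hA : 0 < A) (huv : u < v) (hv : 2 * A * v ≤ c) :
    c * u - A * u ^ 2 < c * v - A * v ^ 2 := by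
  nlinarith [mul_pos hA (mul_pos (sub_pos.mpr huv) (sub_pos.mpr huv))]

private lemma quad_anti (A c u v : ℝ) (hA : 0 < A) (huv : u < v) (hu : c ≤ 2 * A * u) :
    c * v - A * v ^ 2 < c * u - A * u ^ 2 := by
  nlinarith [mul_pos hA (mul_pos (sub_pos.mpr huv) (sub_pos.mpr huv))]

set_option maxHeartbeats 1000000 in
/-- Kinked rate model with current utilization below target
(S̄·u* − B̄ > 0) and r_slope1 < (u*/(1−u*))·r_slope2: for every λ ∈ ℝ the unique
maximizer over [0,∞) of f(x) = x·ℓ·s − x·(ℓ−1)·b(x·(ℓ−1)) − λ·x is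
α²·max(β²−λ,0) if λ < λ²; (S̄·u*−B̄)/(ℓ−1) if λ² ≤ λ ≤ λ¹; α¹·max(β¹−λ,0) if λ¹ < λ. -/
theorem kinked_rate_unique_maximizer_below_target
    (s ℓ lam Sbar Bbar us rbase rslope1 rslope2 : ℝ)
    (hℓ : 1 < ℓ) (hS : 0 < Sbar) (hB : 0 ≤ Bbar)
    (hus0 : 0 < us) (hus1 : us < 1)
    (hrb : 0 ≤ rbase) (hr1 : 0 < rslope1) (hr2 : 0 < rslope2)
    (hbelow : 0 < Sbar * us - Bbar)
    (hslopes : rslope1 < (us / (1 - us)) * rslope2) :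
    let b : ℝ → ℝ := fun B =>
      if Bbar + B < Sbar * us then
        rbase + (Bbar + B) / (Sbar * us) * rslope1
      else
        rbase + rslope1 + (Bbar + B - Sbar * us) / (Sbar * (1 - us)) * rslope2
    let f : ℝ → ℝ := fun x => x * ℓ * s - x * (ℓ - 1) * b (x * (ℓ - 1)) - lam * x
    let α1 : ℝ := Sbar * us / (2 * rslope1 * (ℓ - 1) ^ 2)
    let β1 : ℝ := ℓ * s - (ℓ - 1) * (rbase + Bbar / (Sbar * us) * rslope1)
    let α2 : ℝ := Sbar * (1 - us) / (2 * rslope2 * (ℓ - 1) ^ 2)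
    let β2 : ℝ := ℓ * s - (ℓ - 1) *
      (rbase + rslope1 + (Bbar - Sbar * us) / (Sbar * (1 - us)) * rslope2)
    let lam1 : ℝ := ℓ * s - (ℓ - 1) *
      (rbase + rslope1 + (Sbar * us - Bbar) * rslope1 / (Sbar * us))
    let lam2 : ℝ := ℓ * s - (ℓ - 1) *
      (rbase + rslope1 + (Sbar * us - Bbar) * rslope2 / (Sbar * (1 - us)))
    let xstar : ℝ :=
      if lam < lam2 then α2 * max (β2 - lam) 0
      else if lam ≤ lam1 then (Sbar * us - Bbar) / (ℓ - 1)
      else α1 * max (β1 - lam) 0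
    0 ≤ xstar ∧ ∀ y ∈ Set.Ici (0 : ℝ), y ≠ xstar → f y < f xstar := by
  intro b f α1 β1 α2 β2 lam1 lam2 xstar
  have hk : (0:ℝ) < ℓ - 1 := by linarith
  have h1us : (0:ℝ) < 1 - us := by linarith
  have hSu : (0:ℝ) < Sbar * us := mul_pos hS hus0
  have hSu' : (0:ℝ) < Sbar * (1 - us) := mul_pos hS h1us
  have hk2 : (0:ℝ) < (ℓ - 1) ^ 2 := pow_pos hk 2
  have hSune : Sbar * us ≠ 0 := ne_of_gt hSu
  have hSu'ne : Sbar * (1 - us) ≠ 0 := ne_of_gt hSu'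
  have hkne : ℓ - 1 ≠ 0 := ne_of_gt hk
  set A1 : ℝ := rslope1 * (ℓ - 1) ^ 2 / (Sbar * us) with hA1def
  set A2 : ℝ := rslope2 * (ℓ - 1) ^ 2 / (Sbar * (1 - us)) with hA2def
  set x0 : ℝ := (Sbar * us - Bbar) / (ℓ - 1) with hx0def
  have hA1 : 0 < A1 := div_pos (mul_pos hr1 hk2) hSu
  have hA2 : 0 < A2 := div_pos (mul_pos hr2 hk2) hSu'
  have hx0 : 0 < x0 := div_pos hbelow hk
  have hα1pos : (0:ℝ) < α1 := by
    simp only [α1]; exact div_pos hSu (by nlinarith [mul_pos hr1 hk2])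
  have hα2pos : (0:ℝ) < α2 := by
    simp only [α2]; exact div_pos hSu' (by nlinarith [mul_pos hr2 hk2])
  have hα1A : 2 * A1 * α1 = 1 := by
    simp only [α1, hA1def]; field_simp
  have hα2A : 2 * A2 * α2 = 1 := by
    simp only [α2, hA2def]; field_simp
  have hreg : ∀ x : ℝ, (Bbar + x * (ℓ - 1) < Sbar * us) ↔ x < x0 := by
    intro x
    rw [hx0def, lt_div_iff₀ hk]
    constructor <;> intro <;> linarith
  have hf1 : ∀ x : ℝ, x < x0 → f x = (β1 - lam) * x - A1 * x ^ 2 := by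
    intro x hx
    have hx' : Bbar + x * (ℓ - 1) < Sbar * us := (hreg x).mpr hx
    simp only [f, b, if_pos hx', β1, hA1def]
    field_simp
    ring
  have hf2 : ∀ x : ℝ, x0 ≤ x → f x = (β2 - lam) * x - A2 * x ^ 2 := by
    intro x hx
    have hx' : ¬ (Bbar + x * (ℓ - 1) < Sbar * us) := by rw [hreg x]; linarith
    simp only [f, b, if_neg hx', β2, hA2def]
    field_simp
    ring
  have hcont : (β1 - lam) * x0 - A1 * x0 ^ 2 = (β2 - lam) * x0 - A2 * x0 ^ 2 := by
    simp only [β1, β2, hA1def, hA2def, hx0def]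
    field_simp
    ring
  have hbl1 : β1 - lam1 = 2 * A1 * x0 := by
    simp only [β1, lam1, hA1def, hx0def]
    field_simp
    ring
  have hbl2 : β2 - lam2 = 2 * A2 * x0 := by
    simp only [β2, lam2, hA2def, hx0def]
    field_simp
    ring
  have hkey : rslope1 * (1 - us) < us * rslope2 := by
    rw [div_mul_eq_mul_div, lt_div_iff₀ h1us] at hslopes
    linarith
  have hl21 : lam2 < lam1 := by
    have hcross : (Sbar * us - Bbar) * rslope1 / (Sbar * us)
        < (Sbar * us - Bbar) * rslope2 / (Sbar * (1 - us)) := by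
      rw [div_lt_div_iff₀ hSu hSu']
      linarith [mul_lt_mul_of_pos_left hkey (mul_pos hS hbelow)]
    simp only [lam1, lam2]
    linarith [mul_lt_mul_of_pos_left hcross hk]
  have h2Ax0 : 0 < 2 * A2 * x0 := by positivity
  have h1Ax0 : 0 < 2 * A1 * x0 := by positivity
  constructor
  · simp only [xstar]
    split_ifs
    · exact mul_nonneg hα2pos.le (le_max_right _ _)
    · exact (div_pos hbelow hk).le
    · exact mul_nonneg hα1pos.le (le_max_right _ _)
  · intro y hy hyne
    simp only [Set.mem_Ici] at hy
    by_cases h2 : lam < lam2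
    · -- region 2 interior maximizer
      have hb2 : 2 * A2 * x0 < β2 - lam := by linarith
      have hb2pos : 0 < β2 - lam := by linarith
      have hxs : xstar = α2 * (β2 - lam) := by
        simp only [xstar, if_pos h2, max_eq_left hb2pos.le]
      have hvert : 2 * A2 * xstar = β2 - lam := by
        rw [hxs]; linear_combination (β2 - lam) * hα2A
      have hxsgt : x0 < xstar := by nlinarith
      have hfxs : f xstar = (β2 - lam) * xstar - A2 * xstar ^ 2 := hf2 _ hxsgt.le
      rcases lt_or_ge y x0 with hy1 | hy2
      · rw [hf1 y hy1, hfxs]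
        have hstep1 : (β1 - lam) * y - A1 * y ^ 2 < (β1 - lam) * x0 - A1 * x0 ^ 2 :=
          quad_mono A1 (β1 - lam) y x0 hA1 hy1 (by linarith)
        have hstep2 : (β2 - lam) * x0 - A2 * x0 ^ 2 < (β2 - lam) * xstar - A2 * xstar ^ 2 :=
          quad_mono A2 (β2 - lam) x0 xstar hA2 hxsgt (le_of_eq hvert)
        linarith
      · rw [hf2 y hy2, hfxs]
        exact quad_vertex_max A2 (β2 - lam) y xstar hA2 hvert hyne
    · by_cases h1 : lam ≤ lam1
      · -- kink maximizer
        have hxs : xstar = x0 := by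
          simp only [xstar, if_neg h2, if_pos h1, hx0def]
        have hfxs : f xstar = (β2 - lam) * x0 - A2 * x0 ^ 2 := by
          rw [hxs]; exact hf2 x0 le_rfl
        push_neg at h2
        rcases lt_or_ge y x0 with hy1 | hy2
        · rw [hf1 y hy1, hfxs]
          have hstep1 : (β1 - lam) * y - A1 * y ^ 2 < (β1 - lam) * x0 - A1 * x0 ^ 2 :=
            quad_mono A1 (β1 - lam) y x0 hA1 hy1 (by linarith)
          linarith
        · rw [hf2 y hy2, hfxs]
          have hy2' : x0 < y := lt_of_le_of_ne hy2 (by rw [hxs] at hyne; exact Ne.symm hyne)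
          exact quad_anti A2 (β2 - lam) x0 y hA2 hy2' (by linarith)
      · -- region 1 maximizer
        push_neg at h2 h1
        by_cases hbp : 0 < β1 - lam
        · have hxs : xstar = α1 * (β1 - lam) := by
            simp only [xstar, if_neg (not_lt.mpr h2), if_neg (not_le.mpr h1),
              max_eq_left hbp.le]
          have hvert : 2 * A1 * xstar = β1 - lam := by
            rw [hxs]; linear_combination (β1 - lam) * hα1A
          have hlt : xstar < x0 := by nlinarith
          have hfxs : f xstar = (β1 - lam) * xstar - A1 * xstar ^ 2 := hf1 _ hlt
          rcases lt_or_ge y x0 with hy1 | hy2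
          · rw [hf1 y hy1, hfxs]
            exact quad_vertex_max A1 (β1 - lam) y xstar hA1 hvert hyne
          · rw [hf2 y hy2, hfxs]
            have hstep2 : (β2 - lam) * y - A2 * y ^ 2 ≤ (β2 - lam) * x0 - A2 * x0 ^ 2 := by
              rcases eq_or_lt_of_le hy2 with h | h
              · rw [← h]
              · exact (quad_anti A2 (β2 - lam) x0 y hA2 h (by linarith)).le
            have hstep3 : (β1 - lam) * x0 - A1 * x0 ^ 2 < (β1 - lam) * xstar - A1 * xstar ^ 2 :=
              quad_anti A1 (β1 - lam) xstar x0 hA1 hlt (le_of_eq hvert.symm)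
            linarith
        · push_neg at hbp
          have hxs : xstar = 0 := by
            simp only [xstar, if_neg (not_lt.mpr h2), if_neg (not_le.mpr h1),
              max_eq_right hbp, mul_zero]
          have hfxs : f xstar = 0 := by
            rw [hxs, hf1 0 hx0]; ring
          have hypos : 0 < y := lt_of_le_of_ne hy (by rw [hxs] at hyne; exact Ne.symm hyne)
          rw [hfxs]
          rcases lt_or_ge y x0 with hy1 | hy2
          · rw [hf1 y hy1]
            nlinarith [mul_pos hA1 (mul_pos hypos hypos)]
          · rw [hf2 y hy2]
            have hstep2 : (β2 - lam) * y - A2 * y ^ 2 ≤ (β2 - lam) * x0 - A2 * x0 ^ 2 := by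
              rcases eq_or_lt_of_le hy2 with h | h
              · rw [← h]
              · exact (quad_anti A2 (β2 - lam) x0 y hA2 h (by linarith)).le
            have hstep3 : (β1 - lam) * x0 - A1 * x0 ^ 2 < 0 := by
              nlinarith [mul_pos hA1 (mul_pos hx0 hx0)]
            linarith
end

section
/- Under the kinked rate model with current utilization above target (S̄·u* − B̄ < 0), for every λ ∈ ℝ the unique maximizer over [0,∞) of the per-market objective f(x) = x·ℓ·s − x·(ℓ−1)·b(x·(ℓ−1)) − λ·x is x*(λ) = α²·max(β² − λ, 0). -/
/-- Kinked rate model with current utilization above target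
(S̄·u* − B̄ < 0): for every λ ∈ ℝ the unique maximizer over [0,∞) of
f(x) = x·ℓ·s − x·(ℓ−1)·b(x·(ℓ−1)) − λ·x is x*(λ) = α²·max(β² − λ, 0). -/
theorem kinked_rate_unique_maximizer_above_target
    (s ℓ lam Sbar Bbar us rbase rslope1 rslope2 : ℝ)
    (hℓ : 1 < ℓ) (hS : 0 < Sbar) (hB : 0 ≤ Bbar)
    (hus0 : 0 < us) (hus1 : us < 1)
    (hrb : 0 ≤ rbase) (hr1 : 0 < rslope1) (hr2 : 0 < rslope2)
    (habove : Sbar * us - Bbar < 0) :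
    let b : ℝ → ℝ := fun B =>
      if Bbar + B < Sbar * us then
        rbase + (Bbar + B) / (Sbar * us) * rslope1
      else
        rbase + rslope1 + (Bbar + B - Sbar * us) / (Sbar * (1 - us)) * rslope2
    let f : ℝ → ℝ := fun x => x * ℓ * s - x * (ℓ - 1) * b (x * (ℓ - 1)) - lam * x
    let α2 : ℝ := Sbar * (1 - us) / (2 * rslope2 * (ℓ - 1) ^ 2)
    let β2 : ℝ := ℓ * s - (ℓ - 1) *
      (rbase + rslope1 + (Bbar - Sbar * us) / (Sbar * (1 - us)) * rslope2)
    let xstar : ℝ := α2 * max (β2 - lam) 0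
    0 ≤ xstar ∧ ∀ y ∈ Set.Ici (0 : ℝ), y ≠ xstar → f y < f xstar := by
  intro b f α2 β2 xstar
  have hℓ1 : 0 < ℓ - 1 := by linarith
  have hus : 0 < 1 - us := by linarith
  have hα2 : 0 < α2 := by
    show 0 < Sbar * (1 - us) / (2 * rslope2 * (ℓ - 1) ^ 2)
    positivity
  have hx0 : 0 ≤ xstar := mul_nonneg hα2.le (le_max_right _ _)
  refine ⟨hx0, ?_⟩
  intro y hy hne
  have hy0 : 0 ≤ y := hy
  set A : ℝ := rslope2 * (ℓ - 1) ^ 2 / (Sbar * (1 - us)) with hAdef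
  have hApos : 0 < A := by positivity
  have hαA : α2 * A = 1 / 2 := by
    show Sbar * (1 - us) / (2 * rslope2 * (ℓ - 1) ^ 2) * A = 1 / 2
    rw [hAdef]; field_simp
  have hf : ∀ z : ℝ, 0 ≤ z → f z = -A * z ^ 2 + (β2 - lam) * z := by
    intro z hz
    have hbranch : ¬ (Bbar + z * (ℓ - 1) < Sbar * us) := by nlinarith
    show z * ℓ * s - z * (ℓ - 1) *
        (if Bbar + z * (ℓ - 1) < Sbar * us then
          rbase + (Bbar + z * (ℓ - 1)) / (Sbar * us) * rslope1
        else
          rbase + rslope1 + (Bbar + z * (ℓ - 1) - Sbar * us) / (Sbar * (1 - us)) * rslope2)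
        - lam * z = -A * z ^ 2 + (β2 - lam) * z
    rw [if_neg hbranch, hAdef]
    show z * ℓ * s - z * (ℓ - 1) *
        (rbase + rslope1 + (Bbar + z * (ℓ - 1) - Sbar * us) / (Sbar * (1 - us)) * rslope2)
        - lam * z =
        -(rslope2 * (ℓ - 1) ^ 2 / (Sbar * (1 - us))) * z ^ 2 +
        (ℓ * s - (ℓ - 1) *
          (rbase + rslope1 + (Bbar - Sbar * us) / (Sbar * (1 - us)) * rslope2) - lam) * z
    field_simp
    ring
  rw [hf y hy0, hf xstar hx0]
  rcases le_or_gt (β2 - lam) 0 with hc | hc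
  · have hxeq : xstar = 0 := by
      show α2 * max (β2 - lam) 0 = 0
      rw [max_eq_right hc, mul_zero]
    rw [hxeq]
    have hy' : 0 < y := lt_of_le_of_ne hy0 (fun h => hne (h.symm.trans hxeq.symm))
    nlinarith [sq_nonneg y, mul_pos hApos (mul_pos hy' hy')]
  · have hxeq : xstar = α2 * (β2 - lam) := by
      show α2 * max (β2 - lam) 0 = α2 * (β2 - lam)
      rw [max_eq_left hc.le]
    have hne' : y - xstar ≠ 0 := sub_ne_zero.mpr hne
    have hsq : 0 < (y - xstar) ^ 2 := by positivity
    rw [hxeq] at hsq ⊢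
    nlinarith [mul_pos hApos hsq, hαA, sq_nonneg (y - α2 * (β2 - lam))]
end

section
/- Under the kinked rate model with S̄·u* − B̄ > 0, ℓ > 1, and r_slope1 < (u*/(1−u*))·r_slope2, the two critical multipliers satisfy λ² < λ¹, where λ¹ = ℓ·s − (ℓ−1)·(r_base + r_slope1 + (S̄·u*−B̄)·r_slope1/(S̄·u*)) and λ² = ℓ·s − (ℓ−1)·(r_base + r_slope1 + (S̄·u*−B̄)·r_slope2/(S̄·(1−u*))). -/
/-! λ¹ − λ² = (ℓ − 1)(S̄u* − B̄)(r_slope2/(S̄(1 − u*)) − r_slope1/(S̄u*)), and the slope condition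
says exactly that the kinked rate curve is steeper above the kink than below it:
r_slope1/u* < r_slope2/(1 − u*). -/

theorem div_lt_div_one_sub_of_lt_div_one_sub_mul {u r₁ r₂ : ℝ} (hu0 : 0 < u) (hu1 : u < 1)
    (h : r₁ < u / (1 - u) * r₂) : r₁ / u < r₂ / (1 - u) := by
  have h1u : 0 < 1 - u := sub_pos.2 hu1
  rw [div_lt_div_iff₀ hu0 h1u]
  rw [div_mul_eq_mul_div, lt_div_iff₀ h1u] at h
  linarith

theorem kinked_rate_critical_multipliers_ordered_general
    (s ℓ Sbar Bbar us rbase rslope1 rslope2 : ℝ)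
    (hℓ : 1 < ℓ) (hS : 0 < Sbar)
    (hus0 : 0 < us) (hus1 : us < 1)
    (hbelow : 0 < Sbar * us - Bbar)
    (hslopes : rslope1 < (us / (1 - us)) * rslope2) :
    let lam1 : ℝ := ℓ * s - (ℓ - 1) *
      (rbase + rslope1 + (Sbar * us - Bbar) * rslope1 / (Sbar * us))
    let lam2 : ℝ := ℓ * s - (ℓ - 1) *
      (rbase + rslope1 + (Sbar * us - Bbar) * rslope2 / (Sbar * (1 - us)))
    lam2 < lam1 := by
  intro lam1 lam2
  have hslope : rslope1 / (Sbar * us) < rslope2 / (Sbar * (1 - us)) := by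
    rw [mul_comm Sbar, mul_comm Sbar, ← div_div, ← div_div]
    exact div_lt_div_of_pos_right (div_lt_div_one_sub_of_lt_div_one_sub_mul hus0 hus1 hslopes) hS
  simp only [lam1, lam2, mul_div_assoc]
  gcongr ?_ - _ * (_ + _ * ?_)

/-- Under the kinked rate model with S̄·u* − B̄ > 0, ℓ > 1, and
r_slope1 < (u*/(1−u*))·r_slope2, the critical multipliers satisfy λ² < λ¹. -/
theorem kinked_rate_critical_multipliers_ordered
    (s ℓ Sbar Bbar us rbase rslope1 rslope2 : ℝ)
    (hℓ : 1 < ℓ) (hS : 0 < Sbar) (hB : 0 ≤ Bbar)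
    (hus0 : 0 < us) (hus1 : us < 1)
    (hrb : 0 ≤ rbase) (hr1 : 0 < rslope1) (hr2 : 0 < rslope2)
    (hbelow : 0 < Sbar * us - Bbar)
    (hslopes : rslope1 < (us / (1 - us)) * rslope2) :
    let lam1 : ℝ := ℓ * s - (ℓ - 1) *
      (rbase + rslope1 + (Sbar * us - Bbar) * rslope1 / (Sbar * us))
    let lam2 : ℝ := ℓ * s - (ℓ - 1) *
      (rbase + rslope1 + (Sbar * us - Bbar) * rslope2 / (Sbar * (1 - us)))
    lam2 < lam1 :=
  kinked_rate_critical_multipliers_ordered_general s ℓ Sbar Bbar us rbase rslope1 rslope2 hℓ hS hus0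
    hus1 hbelow hslopes
end

section
/- The adaptive rate model is a reparametrization of the kinked rate model: for all B ∈ ℝ, the adaptive rate function with parameters (S̄, B̄, u*, r_t, k_d) equals the kinked rate function with the same S̄, B̄, u* and with r_base = r_t/k_d, r_slope1 = r_t·(1 − 1/k_d), r_slope2 = r_t·(k_d − 1). -/
/-! On each side of the kink both rates are affine in `B̄ + B`, so it suffices to match them at
two points: the adaptive curve takes the value `r_t / k_d` at zero utilisation and `r_t` at the
target, which are `r_base` and `r_base + r_slope1`. -/

theorem adaptive_rate_below_target_eq {c : ℝ} (hc : c ≠ 0) (rt kd x : ℝ) :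
    rt * (1 + (1 - 1 / kd) * (x - c) / c) = rt / kd + x / c * (rt * (1 - 1 / kd)) := by
  field_simp
  ring

theorem adaptive_rate_above_target_eq (rt kd x c d : ℝ) :
    rt * (1 + (kd - 1) * (x - c) / d) =
      rt / kd + rt * (1 - 1 / kd) + (x - c) / d * (rt * (kd - 1)) := by
  ring

theorem adaptive_rate_eq_kinked_rate_general
    (Sbar Bbar us rt kd : ℝ)
    (hS : 0 < Sbar)
    (hus0 : 0 < us) :
    let badaptive : ℝ → ℝ := fun B =>
      if Bbar + B < Sbar * us then
        rt * (1 + (1 - 1 / kd) * (Bbar + B - Sbar * us) / (Sbar * us))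
      else
        rt * (1 + (kd - 1) * (Bbar + B - Sbar * us) / (Sbar * (1 - us)))
    let rbase : ℝ := rt / kd
    let rslope1 : ℝ := rt * (1 - 1 / kd)
    let rslope2 : ℝ := rt * (kd - 1)
    let bkinked : ℝ → ℝ := fun B =>
      if Bbar + B < Sbar * us then
        rbase + (Bbar + B) / (Sbar * us) * rslope1
      else
        rbase + rslope1 + (Bbar + B - Sbar * us) / (Sbar * (1 - us)) * rslope2
    ∀ B : ℝ, badaptive B = bkinked B := by
  intro badaptive rbase rslope1 rslope2 bkinked B
  simp only [badaptive, bkinked, rbase, rslope1, rslope2]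
  split_ifs
  · exact adaptive_rate_below_target_eq (mul_pos hS hus0).ne' rt kd (Bbar + B)
  · exact adaptive_rate_above_target_eq rt kd (Bbar + B) (Sbar * us) (Sbar * (1 - us))

/-- The adaptive rate model is a reparametrization of the kinked rate model:
for all B, the adaptive rate with parameters (S̄, B̄, u*, r_t, k_d) equals the kinked rate
with r_base = r_t/k_d, r_slope1 = r_t·(1 − 1/k_d), r_slope2 = r_t·(k_d − 1). -/
theorem adaptive_rate_eq_kinked_rate
    (Sbar Bbar us rt kd : ℝ)
    (hS : 0 < Sbar) (hB : 0 ≤ Bbar)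
    (hus0 : 0 < us) (hus1 : us < 1)
    (hrt : 0 < rt) (hkd : 1 < kd) :
    let badaptive : ℝ → ℝ := fun B =>
      if Bbar + B < Sbar * us then
        rt * (1 + (1 - 1 / kd) * (Bbar + B - Sbar * us) / (Sbar * us))
      else
        rt * (1 + (kd - 1) * (Bbar + B - Sbar * us) / (Sbar * (1 - us)))
    let rbase : ℝ := rt / kd
    let rslope1 : ℝ := rt * (1 - 1 / kd)
    let rslope2 : ℝ := rt * (kd - 1)
    let bkinked : ℝ → ℝ := fun B =>
      if Bbar + B < Sbar * us then
        rbase + (Bbar + B) / (Sbar * us) * rslope1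
      else
        rbase + rslope1 + (Bbar + B - Sbar * us) / (Sbar * (1 - us)) * rslope2
    ∀ B : ℝ, badaptive B = bkinked B :=
  adaptive_rate_eq_kinked_rate_general Sbar Bbar us rt kd hS hus0
end

section
/- Under the adaptive rate model with current utilization above target (S̄·u* − B̄ < 0), for every λ ∈ ℝ the unique maximizer over [0,∞) of the per-market objective f(x) = x·ℓ·s − x·(ℓ−1)·b(x·(ℓ−1)) − λ·x is x*(λ) = α²·max(β² − λ, 0), where α² = S̄·(1−u*)/(2·r_t·(k_d − 1)·(ℓ−1)²) and β² = ℓ·s − (ℓ−1)·r_t·(1 + ((B̄ − S̄·u*)/(S̄·(1−u*)))·(k_d − 1)). -/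
/-- Adaptive rate model with current utilization above target
(S̄·u* − B̄ < 0): for every λ ∈ ℝ the unique maximizer over [0,∞) of
f(x) = x·ℓ·s − x·(ℓ−1)·b(x·(ℓ−1)) − λ·x is x*(λ) = α²·max(β² − λ, 0). -/
theorem adaptive_rate_unique_maximizer_above_target
    (s ℓ lam Sbar Bbar us rt kd : ℝ)
    (hℓ : 1 < ℓ) (hS : 0 < Sbar) (hB : 0 ≤ Bbar)
    (hus0 : 0 < us) (hus1 : us < 1)
    (hrt : 0 < rt) (hkd : 1 < kd)
    (habove : Sbar * us - Bbar < 0) :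
    let b : ℝ → ℝ := fun B =>
      if Bbar + B < Sbar * us then
        rt * (1 + (1 - 1 / kd) * (Bbar + B - Sbar * us) / (Sbar * us))
      else
        rt * (1 + (kd - 1) * (Bbar + B - Sbar * us) / (Sbar * (1 - us)))
    let f : ℝ → ℝ := fun x => x * ℓ * s - x * (ℓ - 1) * b (x * (ℓ - 1)) - lam * x
    let α2 : ℝ := Sbar * (1 - us) / (2 * rt * (kd - 1) * (ℓ - 1) ^ 2)
    let β2 : ℝ := ℓ * s - (ℓ - 1) * rt *
      (1 + (Bbar - Sbar * us) / (Sbar * (1 - us)) * (kd - 1))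
    let xstar : ℝ := α2 * max (β2 - lam) 0
    0 ≤ xstar ∧ ∀ y ∈ Set.Ici (0 : ℝ), y ≠ xstar → f y < f xstar := by
  intro b f α2 β2 xstar
  have hℓ1 : (0:ℝ) < ℓ - 1 := by linarith
  have hkd1 : (0:ℝ) < kd - 1 := by linarith
  have hus1' : (0:ℝ) < 1 - us := by linarith
  have hD : (0:ℝ) < Sbar * (1 - us) := by positivity
  set C : ℝ := rt * (kd - 1) * (ℓ - 1) ^ 2 / (Sbar * (1 - us)) with hC
  have hCpos : 0 < C := by positivity
  -- f y = (β2 - lam) * y - C * y^2 for y ≥ 0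
  have key : ∀ y : ℝ, 0 ≤ y → f y = (β2 - lam) * y - C * y ^ 2 := by
    intro y hy
    have hcond : ¬ (Bbar + y * (ℓ - 1) < Sbar * us) := by nlinarith
    simp only [f, b, if_neg hcond, β2, hC]
    field_simp
    ring
  have hα2 : α2 = 1 / (2 * C) := by
    simp only [α2, hC]
    field_simp
  have hα2pos : 0 < α2 := by rw [hα2]; positivity
  constructor
  · exact mul_nonneg hα2pos.le (le_max_right _ _)
  · intro y hy hne
    have hy0 : (0:ℝ) ≤ y := hy
    rw [key y hy0, key xstar (mul_nonneg hα2pos.le (le_max_right _ _))]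
    rcases le_or_gt (β2 - lam) 0 with h | h
    · have hx0 : xstar = 0 := by
        simp only [xstar, max_eq_right h, mul_zero]
      have hypos : 0 < y := lt_of_le_of_ne hy0 (by
        intro heq; exact hne (heq ▸ hx0.symm))
      rw [hx0]
      have h1 : (β2 - lam) * y ≤ 0 := mul_nonpos_of_nonpos_of_nonneg h hy0
      have h2 : 0 < C * y ^ 2 := by positivity
      simp only [mul_zero, ne_eq, OfNat.ofNat_ne_zero, not_false_eq_true, zero_pow, sub_zero]
      linarith
    · have hx : xstar = (β2 - lam) / (2 * C) := by
        simp only [xstar, max_eq_left h.le, hα2]; ring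
      rw [hx]
      have hd : 2 * C * y - (β2 - lam) ≠ 0 := by
        intro h0
        apply hne
        rw [hx]
        field_simp
        linarith
      have hsq : 0 < (2 * C * y - (β2 - lam)) ^ 2 :=
        lt_of_le_of_ne (sq_nonneg _) (Ne.symm (pow_ne_zero 2 hd))
      have hrhs : (β2 - lam) * ((β2 - lam) / (2 * C)) - C * ((β2 - lam) / (2 * C)) ^ 2
          = (β2 - lam) ^ 2 / (4 * C) := by
        field_simp
        ring
      rw [hrhs, lt_div_iff₀ (by positivity)]
      nlinarith [hsq, hCpos]
end
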